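/- If C is a perfect 1-error-correcting binary code of length 15 containing 0, then the number of codewords of Hamming weight 3 in C equals 35. -/

import Mathlib

/-!
Identify a binary word with its support, so that Hamming distance becomes the size of a
symmetric difference. In a perfect 1-code two distinct codewords are at distance at least 3
(flipping one coordinate where they differ gives a word within distance one of both), so
besides `∅` every codeword has at least 3 elements. Consequently the codeword covering a
2-set `s` is a 3-set containing `s`, and conversely every 2-subset of a codeword of size 3
is covered by it. Double counting these incidences gives `3 * N = (n choose 2)`, i.e.
`N = 105 / 3 = 35` for `n = 15`.
-/

open Finset
open scoped symmDiff

namespace Finset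

variable {ι : Type*} [DecidableEq ι]

theorem card_symmDiff (s t : Finset ι) : #(s ∆ t) = #(s \ t) + #(t \ s) := by
  rw [symmDiff_def, sup_eq_union, card_union_of_disjoint disjoint_sdiff_sdiff]

theorem card_symmDiff_le_one_iff_of_card_lt {s t : Finset ι} (h : #s < #t) :
    #(s ∆ t) ≤ 1 ↔ s ⊆ t ∧ #t = #s + 1 := by
  have hs := card_sdiff_add_card_inter s t
  have ht := card_sdiff_add_card_inter t s
  rw [inter_comm] at ht
  rw [card_symmDiff, ← sdiff_eq_empty_iff_subset, ← card_eq_zero]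
  omega

end Finset

def IsPerfectOneCode {ι : Type*} [DecidableEq ι] (𝒞 : Set (Finset ι)) : Prop :=
  ∀ s, ∃! c, c ∈ 𝒞 ∧ #(s ∆ c) ≤ 1

namespace IsPerfectOneCode

variable {ι : Type*} [DecidableEq ι] {𝒞 : Set (Finset ι)}

theorem three_le_card_symmDiff (hperfect : IsPerfectOneCode 𝒞) {c c' : Finset ι} (hc : c ∈ 𝒞)
    (hc' : c' ∈ 𝒞) (hne : c ≠ c') : 3 ≤ #(c ∆ c') := by
  by_contra! hlt
  obtain ⟨i, hi⟩ : (c ∆ c').Nonempty := by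
    rw [nonempty_iff_ne_empty]; exact fun h => hne (symmDiff_eq_bot.1 h)
  have hi' : {i} ⊆ c ∆ c' := singleton_subset_iff.2 hi
  have h₁ : #((c ∆ {i}) ∆ c) ≤ 1 := by
    rw [symmDiff_comm, symmDiff_symmDiff_cancel_left, card_singleton]
  have h₂ : #((c ∆ {i}) ∆ c') ≤ 1 := by
    rw [symmDiff_right_comm, symmDiff_of_ge hi', card_sdiff_of_subset hi', card_singleton]
    omega
  exact hne ((hperfect _).unique ⟨hc, h₁⟩ ⟨hc', h₂⟩)

theorem three_le_card (hperfect : IsPerfectOneCode 𝒞) (hempty : ∅ ∈ 𝒞) {c : Finset ι}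
    (hc : c ∈ 𝒞) (hne : c ≠ ∅) : 3 ≤ #c := by
  simpa [← bot_eq_empty] using hperfect.three_le_card_symmDiff hc hempty hne

theorem mem_and_card_symmDiff_le_one_iff (hperfect : IsPerfectOneCode 𝒞) (hempty : ∅ ∈ 𝒞)
    {s c : Finset ι} (hs : #s = 2) : c ∈ 𝒞 ∧ #(s ∆ c) ≤ 1 ↔ c ∈ 𝒞 ∧ #c = 3 ∧ s ⊆ c := by
  refine ⟨fun ⟨hc, hsc⟩ => ?_, fun ⟨hc, hc3, hsc⟩ => ⟨hc, ?_⟩⟩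
  · have hne : c ≠ ∅ := by rintro rfl; simp [← bot_eq_empty, hs] at hsc
    have hlt : #s < #c := by have := hperfect.three_le_card hempty hc hne; omega
    obtain ⟨hsub, hcard⟩ := (card_symmDiff_le_one_iff_of_card_lt hlt).1 hsc
    exact ⟨hc, by omega, hsub⟩
  · exact (card_symmDiff_le_one_iff_of_card_lt (by omega)).2 ⟨hsc, by omega⟩

theorem three_mul_ncard_eq_choose_two [Fintype ι] (hperfect : IsPerfectOneCode 𝒞)
    (hempty : ∅ ∈ 𝒞) : 3 * {c ∈ 𝒞 | #c = 3}.ncard = (Fintype.card ι).choose 2 := by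
  classical
  set T := (powersetCard 3 univ).filter (· ∈ 𝒞)
  have hT : {c ∈ 𝒞 | #c = 3} = ↑T := by ext c; simp [T, and_comm]
  have hpairs := card_mul_eq_card_mul (· ⊆ ·) (s := powersetCard 2 (univ : Finset ι)) (t := T)
    (m := 1) (n := 3) ?above ?below
  · rw [hT, Set.ncard_coe_finset, mul_comm, ← hpairs, card_powersetCard, card_univ, mul_one]
  case above =>
    intro s hs
    rw [card_eq_one_iff_existsUnique]
    refine existsUnique_congr (fun c => ?_) |>.1 (hperfect s)
    rw [hperfect.mem_and_card_symmDiff_le_one_iff hempty (mem_powersetCard.1 hs).2]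
    simp only [mem_bipartiteAbove, T, mem_filter, mem_powersetCard, subset_univ, true_and]
    tauto
  case below =>
    intro c hc
    have hc3 : #c = 3 := (mem_powersetCard.1 (mem_filter.1 hc).1).2
    have : (powersetCard 2 univ).bipartiteBelow (· ⊆ ·) c = powersetCard 2 c := by
      ext s; simp [mem_bipartiteBelow, mem_powersetCard, and_comm]
    rw [this, card_powersetCard, hc3]; rfl

end IsPerfectOneCode

section BinaryWords

variable {ι : Type*} [Fintype ι] [DecidableEq ι]

def binaryIndicatorEquiv : Finset ι ≃ (ι → ZMod 2) where
  toFun s i := if i ∈ s then 1 else 0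
  invFun x := univ.filter (x · ≠ 0)
  left_inv s := by ext i; by_cases h : i ∈ s <;> simp [h]
  right_inv x := by
    funext i
    simp only [mem_filter, mem_univ, true_and]
    generalize x i = a
    fin_cases a <;> rfl

@[simp]
theorem binaryIndicatorEquiv_empty : binaryIndicatorEquiv (∅ : Finset ι) = 0 := by
  funext i; simp [binaryIndicatorEquiv]

@[simp]
theorem hammingNorm_binaryIndicatorEquiv (s : Finset ι) :
    hammingNorm (binaryIndicatorEquiv s) = #s :=
  congrArg card (binaryIndicatorEquiv.symm_apply_apply s)

theorem binaryIndicatorEquiv_symmDiff (s t : Finset ι) :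
    binaryIndicatorEquiv (s ∆ t) = binaryIndicatorEquiv s + binaryIndicatorEquiv t := by
  funext i
  have hchar : (1 + 1 : ZMod 2) = 0 := rfl
  by_cases hs : i ∈ s <;> by_cases ht : i ∈ t <;>
    simp [binaryIndicatorEquiv, hs, ht, mem_symmDiff, hchar]

@[simp]
theorem hammingDist_binaryIndicatorEquiv (s t : Finset ι) :
    hammingDist (binaryIndicatorEquiv s) (binaryIndicatorEquiv t) = #(s ∆ t) := by
  rw [hammingDist_eq_hammingNorm, ZModModule.neg_eq_self, ← binaryIndicatorEquiv_symmDiff,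
    hammingNorm_binaryIndicatorEquiv]

end BinaryWords

/-- If C is a perfect 1-error-correcting binary code of length 15 containing 0,
then C has exactly 35 codewords of Hamming weight 3. -/
theorem perfect_code_weight3_count
    (C : Set (Fin 15 → ZMod 2)) (h0 : (0 : Fin 15 → ZMod 2) ∈ C)
    (hperfect : ∀ x : Fin 15 → ZMod 2, ∃! c, c ∈ C ∧ hammingDist x c ≤ 1) :
    {c ∈ C | hammingNorm c = 3}.ncard = 35 := by
  set e : Finset (Fin 15) ≃ (Fin 15 → ZMod 2) := binaryIndicatorEquiv
  have hperfect' : IsPerfectOneCode (e ⁻¹' C) := fun s => by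
    simpa [e] using e.existsUnique_congr_right.2 (hperfect (e s))
  have hcount := hperfect'.three_mul_ncard_eq_choose_two (by simpa [e] using h0)
  have hpre : {c ∈ e ⁻¹' C | #c = 3} = e ⁻¹' {c ∈ C | hammingNorm c = 3} := by
    ext s; simp [e]
  rw [hpre, Set.ncard_preimage_of_injective_subset_range e.injective (by simp)] at hcount
  simp only [Fintype.card_fin, Nat.choose_two_right] at hcount
  omega
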